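/- Suppose X ⊆ [ω]^ω has the property that for every G_δ set G ⊆ P(ω) containing Fin there is a σ-compact F ⊆ G with |X ∖ F| < 𝔟. Then X ∪ Fin is 𝔟-concentrated on Fin and for every A ⊆ X with |A| < 𝔟, the set (X ∖ A) ∪ Fin is Hurewicz. -/

import Mathlib

/-!
Given open covers `𝒰 n` of `S = (X ∖ A) ∪ Fin`, the set `G = ⋂ n, ⋃₀ 𝒰 n` is a `G_δ` set
containing `Fin`, so the hypothesis yields a σ-compact `F ⊆ G` with `|S ∖ F| ≤ |X ∖ F| + ℵ₀ < 𝔟`.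
Both σ-compact sets and (Lindelöf) sets of size `< 𝔟` are Hurewicz, and so is the union
`F ∪ (S ∖ F) ⊇ S`, which the `𝒰 n` cover. Concentration is the special case of an open `G`.
-/

open Set Filter Cardinal

/-- The finite subsets of ω, as a subset of Cantor space `ℕ → Bool`. -/
def FinS : Set (ℕ → Bool) := {x | {n | x n = true}.Finite}

/-- The bounding number 𝔟: the least size of a `≤*`-unbounded family in `ω^ω`. -/
noncomputable def bNumber : Cardinal :=
  sInf {c | ∃ F : Set (ℕ → ℕ), c = Cardinal.mk F ∧
    ∀ g : ℕ → ℕ, ∃ f ∈ F, ¬ ∀ᶠ n in Filter.atTop, f n ≤ g n}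

def HurewiczSet {Z : Type*} [TopologicalSpace Z] (S : Set Z) : Prop :=
  ∀ 𝒰 : ℕ → Set (Set Z), (∀ n, (∀ V ∈ 𝒰 n, IsOpen V) ∧ S ⊆ ⋃₀ 𝒰 n) →
    ∃ ℱ : ℕ → Set (Set Z), (∀ n, (ℱ n).Finite ∧ ℱ n ⊆ 𝒰 n) ∧
      ∀ x ∈ S, ∀ᶠ n in Filter.atTop, x ∈ ⋃₀ ℱ n

theorem exists_eventuallyLE_of_mk_lt_bNumber {ι : Type} (f : ι → ℕ → ℕ)
    (h : #ι < bNumber) : ∃ g : ℕ → ℕ, ∀ i, f i ≤ᶠ[atTop] g := by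
  by_contra! hunbounded
  have hmem : #(range f) ∈ {c | ∃ F : Set (ℕ → ℕ), c = #F ∧
      ∀ g : ℕ → ℕ, ∃ f ∈ F, ¬ ∀ᶠ n in atTop, f n ≤ g n} := by
    refine ⟨range f, rfl, fun g => ?_⟩
    obtain ⟨i, hi⟩ := hunbounded g
    exact ⟨f i, mem_range_self i, hi⟩
  exact (csInf_le' hmem).not_gt (mk_range_le.trans_lt h)

theorem exists_eventuallyLE_of_nat (f : ℕ → ℕ → ℕ) :
    ∃ g : ℕ → ℕ, ∀ k, f k ≤ᶠ[atTop] g := by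
  refine ⟨fun n => (Finset.range (n + 1)).sup fun k => f k n, fun k => ?_⟩
  filter_upwards [eventually_ge_atTop k] with n hn
  exact Finset.le_sup (f := fun j => f j n) (Finset.mem_range.2 (Nat.lt_succ_of_le hn))

theorem aleph0_lt_bNumber : ℵ₀ < bNumber := by
  have hne : {c | ∃ F : Set (ℕ → ℕ), c = #F ∧
      ∀ g : ℕ → ℕ, ∃ f ∈ F, ¬ ∀ᶠ n in atTop, f n ≤ g n}.Nonempty := by
    refine ⟨_, univ, rfl, fun g => ⟨g + 1, trivial, fun h => ?_⟩⟩
    obtain ⟨n, hn⟩ := h.exists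
    exact (Nat.lt_succ_self (g n)).not_ge hn
  obtain ⟨F, hF, hunbounded⟩ := csInf_mem hne
  by_contra! hle
  obtain ⟨e, hFe⟩ := countable_iff_exists_subset_range.1
    (le_aleph0_iff_set_countable.1 (hF ▸ hle : #F ≤ ℵ₀))
  obtain ⟨g, hg⟩ := exists_eventuallyLE_of_nat e
  obtain ⟨f, hf, hfg⟩ := hunbounded g
  obtain ⟨k, rfl⟩ := hFe hf
  exact hfg (hg k)

theorem Set.Countable.mk_lt_bNumber {α : Type} {s : Set α} (hs : s.Countable) :
    #s < bNumber :=
  (le_aleph0_iff_set_countable.2 hs).trans_lt aleph0_lt_bNumber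

theorem mk_union_lt_bNumber {α : Type} {s t : Set α} (hs : #s < bNumber) (ht : #t < bNumber) :
    #(s ∪ t : Set α) < bNumber :=
  (mk_union_le s t).trans_lt (add_lt_of_lt aleph0_lt_bNumber.le hs ht)

theorem countable_finS : FinS.Countable :=
  Set.Countable.ofPred_finite.preimage fun _ _ h =>
    funext fun n => Bool.eq_iff_iff.2 (Set.ext_iff.1 h n)

section Hurewicz

variable {Z : Type*} [TopologicalSpace Z]

theorem HurewiczSet.union {s t : Set Z} (hs : HurewiczSet s) (ht : HurewiczSet t) :
    HurewiczSet (s ∪ t) := by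
  intro 𝒰 h𝒰
  obtain ⟨ℱ, hℱ, hsℱ⟩ := hs 𝒰 fun n => ⟨(h𝒰 n).1, subset_union_left.trans (h𝒰 n).2⟩
  obtain ⟨𝒢, h𝒢, ht𝒢⟩ := ht 𝒰 fun n => ⟨(h𝒰 n).1, subset_union_right.trans (h𝒰 n).2⟩
  refine ⟨fun n => ℱ n ∪ 𝒢 n,
    fun n => ⟨(hℱ n).1.union (h𝒢 n).1, union_subset (hℱ n).2 (h𝒢 n).2⟩, ?_⟩
  rintro x (hx | hx)
  · exact (hsℱ x hx).mono fun n hn => sUnion_mono subset_union_left hn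
  · exact (ht𝒢 x hx).mono fun n hn => sUnion_mono subset_union_right hn

theorem IsSigmaCompact.hurewiczSet {s : Set Z} (hs : IsSigmaCompact s) : HurewiczSet s := by
  obtain ⟨K, hK, rfl⟩ := hs
  intro 𝒰 h𝒰
  -- at stage `n` a finite subcover of the compact set `K 0 ∪ ⋯ ∪ K n` is selected
  have hfin : ∀ n, ∃ ℱ ⊆ 𝒰 n, ℱ.Finite ∧ accumulate K n ⊆ ⋃ V ∈ ℱ, V := fun n =>
    (isCompact_accumulate hK n).elim_finite_subcover_image (h𝒰 n).1
      (by rw [← sUnion_eq_biUnion]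
          exact (accumulate_subset_iUnion n).trans (h𝒰 n).2)
  choose ℱ hℱ𝒰 hℱ hKℱ using hfin
  refine ⟨ℱ, fun n => ⟨hℱ n, hℱ𝒰 n⟩, fun x hx => ?_⟩
  obtain ⟨k, hk⟩ := mem_iUnion.1 hx
  filter_upwards [eventually_ge_atTop k] with n hn
  rw [sUnion_eq_biUnion]
  exact hKℱ n (monotone_accumulate hn (subset_accumulate hk))

end Hurewicz

theorem IsLindelof.hurewiczSet_of_mk_lt_bNumber {Z : Type} [TopologicalSpace Z] {s : Set Z}
    (hs : IsLindelof s) (hsmall : #s < bNumber) : HurewiczSet s := by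
  rcases s.eq_empty_or_nonempty with rfl | ⟨x₀, hx₀⟩
  · exact fun 𝒰 _ => ⟨fun _ => ∅, fun _ => ⟨finite_empty, empty_subset _⟩, by simp⟩
  intro 𝒰 h𝒰
  have hsub : ∀ n, ∃ e : ℕ → 𝒰 n, s ⊆ ⋃ k, (e k : Set Z) := fun n =>
    have : Nonempty (𝒰 n) := by
      obtain ⟨V, hV, -⟩ := (h𝒰 n).2 hx₀
      exact ⟨⟨V, hV⟩⟩
    hs.indexed_countable_subcover (fun V : 𝒰 n => (V : Set Z)) (fun V => (h𝒰 n).1 V V.2)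
      (by rw [← sUnion_eq_iUnion]; exact (h𝒰 n).2)
  choose e he using hsub
  have hindex : ∀ (x : s) n, ∃ k, (x : Z) ∈ (e n k : Set Z) := fun x n =>
    mem_iUnion.1 (he n x.2)
  choose index hindex using hindex
  -- fewer than 𝔟 index functions are dominated by one `g`; keep the first `g n + 1` sets
  obtain ⟨g, hg⟩ := exists_eventuallyLE_of_mk_lt_bNumber index hsmall
  refine ⟨fun n => (fun k => (e n k : Set Z)) '' Iic (g n),
    fun n => ⟨(finite_Iic _).image _, image_subset_iff.2 fun k _ => (e n k).2⟩,
    fun x hx => ?_⟩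
  filter_upwards [hg ⟨x, hx⟩] with n hn
  exact ⟨_, mem_image_of_mem _ (mem_Iic.2 hn), hindex ⟨x, hx⟩ n⟩

theorem hurewiczSet_of_forall_isGδ {Z : Type} [TopologicalSpace Z] [HereditarilyLindelofSpace Z]
    {s : Set Z}
    (h : ∀ G, IsGδ G → s ⊆ G → ∃ F, IsSigmaCompact F ∧ F ⊆ G ∧ #(s \ F : Set Z) < bNumber) :
    HurewiczSet s := by
  intro 𝒰 h𝒰
  obtain ⟨F, hF, hFG, hsmall⟩ := h (⋂ n, ⋃₀ 𝒰 n)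
    (.iInter_of_isOpen fun n => isOpen_sUnion (h𝒰 n).1) (subset_iInter fun n => (h𝒰 n).2)
  have hunion : HurewiczSet (F ∪ s \ F) := hF.hurewiczSet.union
    ((HereditarilyLindelofSpace.isLindelof _).hurewiczSet_of_mk_lt_bNumber hsmall)
  obtain ⟨ℱ, hℱ, hsel⟩ := hunion 𝒰 fun n =>
    ⟨(h𝒰 n).1, union_subset (hFG.trans (iInter_subset _ n)) (sdiff_subset.trans (h𝒰 n).2)⟩
  exact ⟨ℱ, hℱ, fun x hx => hsel x (sdiff_subset_iff.1 subset_rfl hx)⟩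

theorem stmt17_general (X : Set (ℕ → Bool))
    (hyp : ∀ G : Set (ℕ → Bool), IsGδ G → FinS ⊆ G →
      ∃ F : Set (ℕ → Bool),
        (∃ C : ℕ → Set (ℕ → Bool), (∀ n, IsCompact (C n)) ∧ F = ⋃ n, C n) ∧
        F ⊆ G ∧ Cardinal.mk ↥(X \ F) < bNumber) :
    (∀ U : Set (ℕ → Bool), IsOpen U → FinS ⊆ U →
        Cardinal.mk ↥(X \ U) < bNumber) ∧
    ∀ A ⊆ X, Cardinal.mk A < bNumber → HurewiczSet ((X \ A) ∪ FinS) := by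
  refine ⟨fun U hU hFinU => ?_, fun A _ _ => hurewiczSet_of_forall_isGδ fun G hG hG' => ?_⟩
  · obtain ⟨F, -, hFU, hsmall⟩ := hyp U hU.isGδ hFinU
    exact (mk_le_mk_of_subset (sdiff_subset_sdiff_right hFU)).trans_lt hsmall
  · obtain ⟨F, ⟨C, hC, rfl⟩, hFG, hsmall⟩ := hyp G hG (subset_union_right.trans hG')
    refine ⟨_, ⟨C, hC, rfl⟩, hFG, ?_⟩
    have hsub : (X \ A ∪ FinS) \ ⋃ n, C n ⊆ (X \ ⋃ n, C n) ∪ FinS :=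
      fun x ⟨hx, hxC⟩ => hx.imp (fun hxX => ⟨hxX.1, hxC⟩) id
    exact (mk_le_mk_of_subset hsub).trans_lt
      (mk_union_lt_bNumber hsmall countable_finS.mk_lt_bNumber)

/-- if every `G_δ` set `G ⊇ Fin` contains a σ-compact `F ⊆ G` with
`|X ∖ F| < 𝔟`, then `X ∪ Fin` is 𝔟-concentrated on `Fin` (every open set containing
`Fin` misses fewer than 𝔟 points of `X`) and for every `A ⊆ X` with `|A| < 𝔟` the set
`(X ∖ A) ∪ Fin` is Hurewicz. -/
theorem stmt17 (X : Set (ℕ → Bool)) (hX : ∀ x ∈ X, {n | x n = true}.Infinite)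
    (hyp : ∀ G : Set (ℕ → Bool), IsGδ G → FinS ⊆ G →
      ∃ F : Set (ℕ → Bool),
        (∃ C : ℕ → Set (ℕ → Bool), (∀ n, IsCompact (C n)) ∧ F = ⋃ n, C n) ∧
        F ⊆ G ∧ Cardinal.mk ↥(X \ F) < bNumber) :
    (∀ U : Set (ℕ → Bool), IsOpen U → FinS ⊆ U →
        Cardinal.mk ↥(X \ U) < bNumber) ∧
    ∀ A ⊆ X, Cardinal.mk A < bNumber → HurewiczSet ((X \ A) ∪ FinS) :=
  stmt17_general X hyp
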